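/- Let q ≥ 3 be an integer, F an alphabet of size q, and for integers 0 ≤ d ≤ n set r_{d,n} = max{0, min{⌈(d−1)/2⌉, ⌈(n−d−q+1)/(q−2)⌉}} and let S(d,n) = B(r_{d,n}; n−d+2r_{d,n}) × F^{d−2r_{d,n}}, where B(r;m) is the Hamming ball of radius r about a fixed center in F^m. Then for every δ ∈ [0,1], lim_{n→∞} (1/n) log_q |S(⌊δn⌋, n)| = β(δ), where β(δ) = H_q(δ/2) for δ ∈ [0, 2/q] and β(δ) = 1 − (1−δ) log_q(q−1) for δ ∈ [2/q, 1]. -/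

import Mathlib

/-!
Comparing a Hamming ball `B(r; m)` with the largest term of the binomial expansion
`m ^ m = (r + (m - r)) ^ m` gives, as soon as `r ≤ (q - 1)(m - r)`,
`log |B(r; m)| = r log (q - 1) + m log m - r log r - (m - r) log (m - r) + O(log m)`.
Written with `negMulLog`, this exponent is continuous and homogeneous of degree one in `(m, r)`,
so for `m = n - d + 2r`, `d = ⌊δ n⌋` and `r / n → ρ = min (δ / 2) ((1 - δ) / (q - 2))`,
dividing by `n` passes to the limit, even when `ρ = 0`. The factor `F^{d - 2r}` adds `δ - 2ρ`,
and the two cases of `β` are the two cases of the minimum.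
-/

open Filter Real Set

/-- The q-ary entropy function. -/
noncomputable def qEntropy (q : ℕ) (x : ℝ) : ℝ :=
  x * Real.logb q (((q : ℝ) - 1) / x) + (1 - x) * Real.logb q (1 / (1 - x))

/-- The function `β`. -/
noncomputable def betaFn (q : ℕ) (x : ℝ) : ℝ :=
  if x ≤ 2 / (q : ℝ) then qEntropy q (x / 2)
  else 1 - (1 - x) * Real.logb q ((q : ℝ) - 1)

/-- The radius `r_{d,n} = max{0, min{⌈(d-1)/2⌉, ⌈(n-d-q+1)/(q-2)⌉}}`. -/
noncomputable def rdn (q d n : ℕ) : ℕ :=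
  (min ⌈(((d : ℚ)) - 1) / 2⌉ ⌈(((n : ℚ)) - d - q + 1) / ((q : ℚ) - 2)⌉).toNat

/-- The cardinality of the Hamming ball `B(r; m)` of radius `r` in `F^m`
(centered at a fixed word, here the zero word). -/
noncomputable def ballCard (q m r : ℕ) [NeZero q] : ℕ :=
  (Finset.univ.filter (fun v : Fin m → Fin q => hammingNorm v ≤ r)).card

/-- The cardinality of the Ahlswede-Khachatrian anticode
`S(d,n) = B(r_{d,n}; n-d+2r_{d,n}) × F^{d-2r_{d,n}}`. -/
noncomputable def AKAnticodeCard (q d n : ℕ) [NeZero q] : ℕ :=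
  ballCard q (n - d + 2 * rdn q d n) (rdn q d n) * q ^ (d - 2 * rdn q d n)

open Finset Topology

section Hamming

variable {ι β : Type*} [Fintype ι] [DecidableEq ι] [Fintype β] [DecidableEq β] [Zero β]

theorem mem_piFinset_ite_iff (s : Finset ι) (v : ι → β) :
    v ∈ Fintype.piFinset (fun j => if j ∈ s then univ.erase 0 else {0}) ↔
      univ.filter (fun j => v j ≠ 0) = s := by
  simp only [Fintype.mem_piFinset, Finset.ext_iff, Finset.mem_filter, Finset.mem_univ, true_and]
  refine forall_congr' fun j => ?_
  by_cases hj : j ∈ s <;> simp [hj]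

theorem card_hammingNorm_eq (i : ℕ) :
    #{v : ι → β | hammingNorm v = i} =
      (Fintype.card ι).choose i * (Fintype.card β - 1) ^ i := by
  have hsphere : ({v : ι → β | hammingNorm v = i} : Finset _) =
      (powersetCard i univ).biUnion
        (fun s => Fintype.piFinset (fun j => if j ∈ s then univ.erase 0 else {0})) := by
    ext v
    simp only [Finset.mem_filter, Finset.mem_univ, true_and, Finset.mem_biUnion,
      Finset.mem_powersetCard, Finset.subset_univ, mem_piFinset_ite_iff, exists_eq_right',
      hammingNorm]
  rw [hsphere, card_biUnion]
  · rw [sum_congr rfl (g := fun _ => (Fintype.card β - 1) ^ i), sum_const, card_powersetCard,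
      card_univ, smul_eq_mul]
    intro s hs
    simp only [Fintype.card_piFinset, apply_ite card, card_erase_of_mem (Finset.mem_univ _),
      card_univ, Finset.card_singleton, prod_ite_mem, Finset.univ_inter,
      prod_const, (mem_powersetCard.1 hs).2]
  · intro s _ t _ hst
    refine disjoint_left.2 fun v hs ht => hst ?_
    rw [mem_piFinset_ite_iff] at hs ht
    exact hs.symm.trans ht

end Hamming

theorem ballCard_eq_sum (q m r : ℕ) [NeZero q] :
    ballCard q m r = ∑ i ∈ range (r + 1), m.choose i * (q - 1) ^ i := by
  rw [ballCard, card_eq_sum_card_fiberwise (f := hammingNorm) (t := range (r + 1))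
    fun v hv => mem_range_succ_iff.2 (Finset.mem_filter.1 hv).2]
  refine sum_congr rfl fun i hi => ?_
  have := card_hammingNorm_eq (ι := Fin m) (β := Fin q) i
  rw [Fintype.card_fin, Fintype.card_fin] at this
  rw [filter_filter, ← this]
  congr 1
  ext v
  simp only [Finset.mem_filter, Finset.mem_univ, true_and, and_iff_right_iff_imp]
  rintro rfl
  exact mem_range_succ_iff.1 hi

theorem ballCard_pos (q m r : ℕ) [NeZero q] : 0 < ballCard q m r :=
  Finset.card_pos.2 ⟨0, by simp [hammingNorm]⟩

def binomTerm (m r i : ℕ) : ℕ := m.choose i * (r ^ i * (m - r) ^ (m - i))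

theorem sum_binomTerm {m r : ℕ} (hr : r ≤ m) :
    ∑ i ∈ range (m + 1), binomTerm m r i = m ^ m := by
  have h := add_pow r (m - r) m
  rw [Nat.add_sub_cancel' hr] at h
  rw [h]
  exact sum_congr rfl fun i _ => by rw [binomTerm, Nat.cast_id]; ring

theorem binomTerm_le_succ {m r i : ℕ} (hi : i < r) (hr : r ≤ m) :
    binomTerm m r i ≤ binomTerm m r (i + 1) := by
  have hm : m - i = m - (i + 1) + 1 := by omega
  have hc := Nat.choose_succ_right_eq m i
  refine Nat.le_of_mul_le_mul_left ?_ i.succ_pos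
  calc (i + 1) * binomTerm m r i
      = m.choose i * r ^ i * (m - r) ^ (m - (i + 1)) * ((i + 1) * (m - r)) := by
        rw [binomTerm, hm]; ring
    _ ≤ m.choose i * r ^ i * (m - r) ^ (m - (i + 1)) * (r * (m - i)) :=
        Nat.mul_le_mul_left _ (Nat.mul_le_mul (by omega) (by omega))
    _ = (i + 1) * binomTerm m r (i + 1) := by
        rw [binomTerm]; linear_combination (r ^ (i + 1) * (m - r) ^ (m - (i + 1))) * hc.symm

theorem binomTerm_succ_le {m r i : ℕ} (hi : r ≤ i) :
    binomTerm m r (i + 1) ≤ binomTerm m r i := by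
  rcases lt_or_ge i m with him | hmi
  · have hm : m - i = m - (i + 1) + 1 := by omega
    have hc := Nat.choose_succ_right_eq m i
    refine Nat.le_of_mul_le_mul_left ?_ i.succ_pos
    calc (i + 1) * binomTerm m r (i + 1)
        = m.choose i * r ^ i * (m - r) ^ (m - (i + 1)) * (r * (m - i)) := by
          rw [binomTerm]; linear_combination (r ^ (i + 1) * (m - r) ^ (m - (i + 1))) * hc
      _ ≤ m.choose i * r ^ i * (m - r) ^ (m - (i + 1)) * ((i + 1) * (m - r)) :=
          Nat.mul_le_mul_left _ (Nat.mul_le_mul (by omega) (by omega))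
      _ = (i + 1) * binomTerm m r i := by rw [binomTerm, hm]; ring
  · simp [binomTerm, Nat.choose_eq_zero_of_lt (Nat.lt_succ_of_le hmi)]

theorem binomTerm_le_binomTerm_self {m r : ℕ} (hr : r ≤ m) (i : ℕ) :
    binomTerm m r i ≤ binomTerm m r r := by
  rcases le_total i r with hir | hri
  · have hanti : Antitone fun j => binomTerm m r (r - j) := antitone_nat_of_succ_le fun j => by
      rcases lt_or_ge j r with hj | hj
      · have := binomTerm_le_succ (m := m) (show r - (j + 1) < r by omega) hr
        rwa [show r - (j + 1) + 1 = r - j by omega] at this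
      · rw [show r - (j + 1) = r - j by omega]
    simpa [Nat.sub_sub_self hir] using hanti (Nat.zero_le (r - i))
  · have hanti : Antitone fun j => binomTerm m r (r + j) :=
      antitone_nat_of_succ_le fun j => binomTerm_succ_le (Nat.le_add_right r j)
    simpa [Nat.add_sub_cancel' hri] using hanti (Nat.zero_le (i - r))

theorem pow_le_succ_mul_binomTerm_self {m r : ℕ} (hr : r ≤ m) :
    m ^ m ≤ (m + 1) * binomTerm m r r := by
  calc m ^ m = ∑ i ∈ range (m + 1), binomTerm m r i := (sum_binomTerm hr).symm
    _ ≤ #(range (m + 1)) • binomTerm m r r :=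
        sum_le_card_nsmul _ _ _ fun i _ => binomTerm_le_binomTerm_self hr i
    _ = (m + 1) * binomTerm m r r := by rw [card_range, smul_eq_mul]

theorem choose_mul_pow_le_ballCard (q m r : ℕ) [NeZero q] :
    m.choose r * (q - 1) ^ r ≤ ballCard q m r := by
  rw [ballCard_eq_sum]
  exact single_le_sum (f := fun i => m.choose i * (q - 1) ^ i) (fun _ _ => Nat.zero_le _)
    (self_mem_range_succ r)

theorem pow_mul_pow_le_succ_mul_ballCard_mul (q : ℕ) [NeZero q] {m r : ℕ} (hr : r ≤ m) :
    (q - 1) ^ r * m ^ m ≤ (m + 1) * (ballCard q m r * (r ^ r * (m - r) ^ (m - r))) := by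
  calc (q - 1) ^ r * m ^ m ≤ (q - 1) ^ r * ((m + 1) * binomTerm m r r) :=
        Nat.mul_le_mul_left _ (pow_le_succ_mul_binomTerm_self hr)
    _ = (m + 1) * (m.choose r * (q - 1) ^ r * (r ^ r * (m - r) ^ (m - r))) := by
        rw [binomTerm]; ring
    _ ≤ (m + 1) * (ballCard q m r * (r ^ r * (m - r) ^ (m - r))) :=
        Nat.mul_le_mul_left _ (Nat.mul_le_mul_right _ (choose_mul_pow_le_ballCard q m r))

theorem le_of_le_mul_tsub {k m r : ℕ} (h : r ≤ k * (m - r)) : r ≤ m := by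
  by_contra hrm
  rw [Nat.sub_eq_zero_of_le (le_of_not_ge hrm), mul_zero] at h
  omega

theorem ballCard_mul_le_pow_mul_pow (q : ℕ) [NeZero q] {m r : ℕ}
    (hr : r ≤ (q - 1) * (m - r)) :
    ballCard q m r * (r ^ r * (m - r) ^ (m - r)) ≤ (q - 1) ^ r * m ^ m := by
  have hrm : r ≤ m := le_of_le_mul_tsub hr
  have hterm : ∀ i ≤ r, m.choose i * (q - 1) ^ i * (r ^ r * (m - r) ^ (m - r))
      ≤ (q - 1) ^ r * binomTerm m r i := by
    intro i hi
    have hsplit : ∀ a : ℕ, a ^ r = a ^ i * a ^ (r - i) := fun a => by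
      rw [← pow_add, Nat.add_sub_cancel' hi]
    calc m.choose i * (q - 1) ^ i * (r ^ r * (m - r) ^ (m - r))
        = m.choose i * (q - 1) ^ i * r ^ i * (m - r) ^ (m - r) * r ^ (r - i) := by
          rw [hsplit r]; ring
      _ ≤ m.choose i * (q - 1) ^ i * r ^ i * (m - r) ^ (m - r) * ((q - 1) * (m - r)) ^ (r - i) :=
          Nat.mul_le_mul_left _ (Nat.pow_le_pow_left hr _)
      _ = (q - 1) ^ r * binomTerm m r i := by
          rw [binomTerm, hsplit (q - 1), show m - i = m - r + (r - i) by omega]; ring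
  calc ballCard q m r * (r ^ r * (m - r) ^ (m - r))
      = ∑ i ∈ range (r + 1), m.choose i * (q - 1) ^ i * (r ^ r * (m - r) ^ (m - r)) := by
        rw [ballCard_eq_sum, sum_mul]
    _ ≤ ∑ i ∈ range (r + 1), (q - 1) ^ r * binomTerm m r i :=
        sum_le_sum fun i hi => hterm i (mem_range_succ_iff.1 hi)
    _ ≤ ∑ i ∈ range (m + 1), (q - 1) ^ r * binomTerm m r i :=
        sum_le_sum_of_subset (range_subset_range.2 (by omega))
    _ = (q - 1) ^ r * m ^ m := by rw [← mul_sum, sum_binomTerm hrm]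

/-- `μ H_q(ρ / μ)` in nats: `log |B(ρ n; μ n)| ≈ n * ballRate q μ ρ`. -/
noncomputable def ballRate (q : ℕ) (μ ρ : ℝ) : ℝ :=
  ρ * log (q - 1) + negMulLog ρ + negMulLog (μ - ρ) - negMulLog μ

theorem ballRate_mul (q : ℕ) (c μ ρ : ℝ) :
    ballRate q (c * μ) (c * ρ) = c * ballRate q μ ρ := by
  simp only [ballRate, ← mul_sub, negMulLog_mul]
  ring

theorem log_natCast_mul {a b : ℕ} (ha : 0 < a) (hb : 0 < b) :
    log ((a * b : ℕ) : ℝ) = log a + log b := by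
  rw [Nat.cast_mul, log_mul (mod_cast ha.ne') (mod_cast hb.ne')]

theorem log_pow_mul_pow_sub {m r : ℕ} (hr : r ≤ m) :
    log ((r ^ r * (m - r) ^ (m - r) : ℕ) : ℝ) = -(negMulLog r + negMulLog ((m : ℝ) - r)) := by
  rw [log_natCast_mul Nat.pow_self_pos Nat.pow_self_pos, Nat.cast_pow, Nat.cast_pow, log_pow,
    log_pow, Nat.cast_sub hr]
  simp only [negMulLog]
  ring

theorem log_pred_pow_mul_pow_self {q : ℕ} (hq : 1 < q) (m r : ℕ) :
    log (((q - 1) ^ r * m ^ m : ℕ) : ℝ) = r * log ((q : ℝ) - 1) - negMulLog m := by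
  rw [log_natCast_mul (pow_pos (Nat.sub_pos_of_lt hq) r) Nat.pow_self_pos, Nat.cast_pow,
    Nat.cast_pow, log_pow, log_pow, Nat.cast_pred (by omega), negMulLog]
  ring

theorem log_ballCard_le (q : ℕ) [NeZero q] (hq : 1 < q) {m r : ℕ}
    (hr : r ≤ (q - 1) * (m - r)) : log (ballCard q m r) ≤ ballRate q m r := by
  have hw : 0 < r ^ r * (m - r) ^ (m - r) := Nat.mul_pos Nat.pow_self_pos Nat.pow_self_pos
  have h := log_le_log (mod_cast Nat.mul_pos (ballCard_pos q m r) hw)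
    (Nat.cast_le (α := ℝ).2 (ballCard_mul_le_pow_mul_pow q hr))
  rw [log_natCast_mul (ballCard_pos q m r) hw, log_pow_mul_pow_sub (le_of_le_mul_tsub hr),
    log_pred_pow_mul_pow_self hq] at h
  rw [ballRate]
  linarith

theorem ballRate_le_log_ballCard_add (q : ℕ) [NeZero q] (hq : 1 < q) {m r : ℕ} (hr : r ≤ m) :
    ballRate q m r ≤ log (ballCard q m r) + log (m + 1) := by
  have hw : 0 < r ^ r * (m - r) ^ (m - r) := Nat.mul_pos Nat.pow_self_pos Nat.pow_self_pos
  have h := log_le_log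
    (mod_cast Nat.mul_pos (pow_pos (Nat.sub_pos_of_lt hq) r) Nat.pow_self_pos)
    (Nat.cast_le (α := ℝ).2 (pow_mul_pow_le_succ_mul_ballCard_mul q hr))
  rw [log_pred_pow_mul_pow_self hq,
    log_natCast_mul m.succ_pos (Nat.mul_pos (ballCard_pos q m r) hw),
    log_natCast_mul (ballCard_pos q m r) hw, log_pow_mul_pow_sub hr, Nat.cast_succ] at h
  rw [ballRate]
  linarith

theorem tendsto_log_succ_div {m : ℕ → ℕ} {μ : ℝ}
    (hm : Tendsto (fun n => (m n : ℝ) / n) atTop (𝓝 μ)) :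
    Tendsto (fun n => log ((m n : ℝ) + 1) / n) atTop (𝓝 0) := by
  set b : ℕ → ℝ := fun n => m n + 1 + n
  have hb : Tendsto b atTop atTop :=
    tendsto_atTop_mono (fun n => by simp only [b]; linarith [(m n).cast_nonneg (α := ℝ)])
      tendsto_natCast_atTop_atTop
  have hbn : Tendsto (fun n => b n / n) atTop (𝓝 (μ + 1)) := by
    have h := (hm.add tendsto_one_div_atTop_nhds_zero_nat).add (tendsto_const_nhds (x := (1 : ℝ)))
    rw [add_zero] at h
    refine h.congr' ?_
    filter_upwards [eventually_ne_atTop 0] with n hn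
    simp only [b]
    field_simp
  have hlogb : Tendsto (fun n => log (b n) / b n) atTop (𝓝 0) :=
    isLittleO_log_id_atTop.tendsto_div_nhds_zero.comp hb
  have hlog := hlogb.mul hbn
  rw [zero_mul] at hlog
  refine tendsto_of_tendsto_of_tendsto_of_le_of_le' tendsto_const_nhds hlog
    (Eventually.of_forall fun n =>
      div_nonneg (log_nonneg (le_add_of_nonneg_left (m n).cast_nonneg)) n.cast_nonneg) ?_
  filter_upwards [eventually_ne_atTop 0] with n hn
  have hbpos : 0 < b n := by simp only [b]; positivity
  calc log ((m n : ℝ) + 1) / n ≤ log (b n) / n := by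
        gcongr
        simp only [b]; linarith [(n.cast_nonneg : (0 : ℝ) ≤ n)]
    _ = log (b n) / b n * (b n / n) := by field_simp

theorem continuous_ballRate (q : ℕ) : Continuous fun p : ℝ × ℝ => ballRate q p.1 p.2 := by
  unfold ballRate
  fun_prop

theorem tendsto_log_ballCard_div (q : ℕ) [NeZero q] (hq : 1 < q) {m r : ℕ → ℕ} {μ ρ : ℝ}
    (hr : ∀ n, r n ≤ (q - 1) * (m n - r n))
    (hm : Tendsto (fun n => (m n : ℝ) / n) atTop (𝓝 μ))
    (hρ : Tendsto (fun n => (r n : ℝ) / n) atTop (𝓝 ρ)) :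
    Tendsto (fun n => log (ballCard q (m n) (r n)) / n) atTop (𝓝 (ballRate q μ ρ)) := by
  have hrate : Tendsto (fun n => ballRate q (m n) (r n) / n) atTop (𝓝 (ballRate q μ ρ)) := by
    refine ((continuous_ballRate q).tendsto _ |>.comp (hm.prodMk_nhds hρ)).congr fun n => ?_
    simp only [Function.comp, div_eq_inv_mul, ballRate_mul]
  have hlow := hrate.sub (tendsto_log_succ_div hm)
  rw [sub_zero] at hlow
  refine tendsto_of_tendsto_of_tendsto_of_le_of_le hlow hrate (fun n => ?_) (fun n => ?_)
  · rw [← sub_div]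
    gcongr
    linarith [ballRate_le_log_ballCard_add q hq (le_of_le_mul_tsub (hr n))]
  · exact div_le_div_of_nonneg_right (log_ballCard_le q hq (hr n)) n.cast_nonneg

theorem rdn_cast (q d n : ℕ) :
    (rdn q d n : ℝ) =
      max (min (⌈((d : ℝ) - 1) / 2⌉ : ℝ)
        (⌈((n : ℝ) - d - q + 1) / ((q : ℝ) - 2)⌉ : ℝ)) 0 := by
  have h := Int.toNat_eq_max
    (min ⌈((d : ℚ) - 1) / 2⌉ ⌈((n : ℚ) - d - q + 1) / ((q : ℚ) - 2)⌉)
  rw [rdn, ← Int.cast_natCast, h]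
  push_cast [← Rat.ceil_cast (α := ℝ)]
  rfl

theorem two_mul_rdn_le (q d n : ℕ) : 2 * rdn q d n ≤ d := by
  have h : (rdn q d n : ℝ) < ((d : ℝ) + 1) / 2 := by
    rw [rdn_cast]
    refine max_lt ((min_le_left _ _).trans_lt ?_) (by positivity)
    linarith [Int.ceil_lt_add_one (((d : ℝ) - 1) / 2)]
  have h' : ((2 * rdn q d n : ℕ) : ℝ) < d + 1 := by push_cast; linarith
  exact Nat.lt_succ_iff.1 (mod_cast h')

theorem tendsto_ceil_div {a : ℕ → ℝ} {L : ℝ}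
    (h : Tendsto (fun n => a n / n) atTop (𝓝 L)) :
    Tendsto (fun n => (⌈a n⌉ : ℝ) / n) atTop (𝓝 L) := by
  have hup := h.add tendsto_one_div_atTop_nhds_zero_nat
  rw [add_zero] at hup
  refine tendsto_of_tendsto_of_tendsto_of_le_of_le h hup (fun n => ?_) (fun n => ?_)
  · exact div_le_div_of_nonneg_right (Int.le_ceil _) n.cast_nonneg
  · rw [← add_div]
    exact div_le_div_of_nonneg_right (Int.ceil_lt_add_one _).le n.cast_nonneg

theorem tendsto_rdn_div (q : ℕ) {d : ℕ → ℕ} {δ : ℝ}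
    (hd : Tendsto (fun n => (d n : ℝ) / n) atTop (𝓝 δ)) :
    Tendsto (fun n => (rdn q (d n) n : ℝ) / n) atTop
      (𝓝 (max (min (δ / 2) ((1 - δ) / ((q : ℝ) - 2))) 0)) := by
  have hinv := tendsto_one_div_atTop_nhds_zero_nat (𝕜 := ℝ)
  have hnn : Tendsto (fun n : ℕ => (n : ℝ) / n) atTop (𝓝 1) := by
    simpa using tendsto_natCast_div_add_atTop (0 : ℝ)
  have ha : Tendsto (fun n => (((d n : ℝ) - 1) / 2) / n) atTop (𝓝 (δ / 2)) := by
    have h := (hd.sub hinv).div_const 2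
    rw [sub_zero] at h
    exact h.congr fun n => by ring
  have hb : Tendsto (fun n : ℕ => (((n : ℝ) - d n - q + 1) / ((q : ℝ) - 2)) / n) atTop
      (𝓝 ((1 - δ) / ((q : ℝ) - 2))) := by
    have h := (((hnn.sub hd).sub (hinv.const_mul (q : ℝ))).add hinv).div_const ((q : ℝ) - 2)
    rw [mul_zero, sub_zero, add_zero] at h
    exact h.congr fun n => by ring
  have h := ((tendsto_ceil_div ha).min (tendsto_ceil_div hb)).max
    (tendsto_const_nhds (x := (0 : ℝ)))
  refine h.congr fun n => ?_
  rw [min_div_div_right n.cast_nonneg, ← zero_div (n : ℝ), max_div_div_right n.cast_nonneg,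
    rdn_cast]

theorem mul_log_div_self (a x : ℝ) (ha : a ≠ 0) :
    x * log (a / x) = x * log a + negMulLog x := by
  rcases eq_or_ne x 0 with rfl | hx
  · simp
  · rw [log_div ha hx, negMulLog]
    ring

theorem betaFn_mul_log (q : ℕ) (hq : 3 ≤ q) (δ : ℝ) {ρ : ℝ}
    (hρ : ρ = min (δ / 2) ((1 - δ) / ((q : ℝ) - 2))) :
    betaFn q δ * log q = ballRate q (1 - δ + 2 * ρ) ρ + (δ - 2 * ρ) * log q := by
  have hq' : (3 : ℝ) ≤ q := mod_cast hq
  have hlogq : log q ≠ 0 := (log_pos (by linarith)).ne'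
  rw [betaFn]
  split_ifs with hδ
  · have hρ' : ρ = δ / 2 := by
      rw [hρ, min_eq_left]
      rw [le_div_iff₀ (by linarith : (0 : ℝ) < q)] at hδ
      rw [div_le_div_iff₀ (by norm_num) (by linarith)]
      linarith
    subst hρ'
    rw [qEntropy, logb, logb, one_div, log_inv, ← mul_div_assoc, ← mul_div_assoc,
      mul_log_div_self _ _ (by linarith), ballRate,
      show 1 - δ + 2 * (δ / 2) = 1 by ring, negMulLog_one]
    simp only [negMulLog]
    field_simp
    ring
  · have hρ' : ((q : ℝ) - 2) * ρ = 1 - δ := by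
      rw [hρ, min_eq_right]
      · exact mul_div_cancel₀ _ (by linarith)
      rw [not_le, div_lt_iff₀ (by linarith : (0 : ℝ) < q)] at hδ
      rw [div_le_div_iff₀ (by linarith) (by norm_num)]
      linarith
    have hμ : 1 - δ + 2 * ρ = q * ρ := by linear_combination -hρ'
    have hν : q * ρ - ρ = (q - 1) * ρ := by ring
    rw [hμ, ballRate, hν, negMulLog_mul, negMulLog_mul, logb]
    simp only [negMulLog]
    field_simp
    linear_combination (log ((q : ℝ) - 1) - log q) * hρ'

theorem tendsto_log_ballCard_mul_pow_div (q : ℕ) [NeZero q] (hq : 1 < q) {d r : ℕ → ℕ}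
    {δ ρ : ℝ} (hdn : ∀ n, d n ≤ n) (hrd : ∀ n, 2 * r n ≤ d n)
    (hd : Tendsto (fun n => (d n : ℝ) / n) atTop (𝓝 δ))
    (hr : Tendsto (fun n => (r n : ℝ) / n) atTop (𝓝 ρ)) :
    Tendsto
      (fun n => log ((ballCard q (n - d n + 2 * r n) (r n) * q ^ (d n - 2 * r n) : ℕ) : ℝ) / n)
      atTop (𝓝 (ballRate q (1 - δ + 2 * ρ) ρ + (δ - 2 * ρ) * log q)) := by
  have hnn : Tendsto (fun n : ℕ => (n : ℝ) / n) atTop (𝓝 1) := by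
    simpa using tendsto_natCast_div_add_atTop (0 : ℝ)
  have hm : Tendsto (fun n => ((n - d n + 2 * r n : ℕ) : ℝ) / n) atTop
      (𝓝 (1 - δ + 2 * ρ)) :=
    ((hnn.sub hd).add (hr.const_mul 2)).congr fun n => by
      rw [Nat.cast_add, Nat.cast_sub (hdn n)]; push_cast; ring
  have hball := tendsto_log_ballCard_div q hq (m := fun n => n - d n + 2 * r n)
    (fun n => le_mul_of_one_le_of_le (by omega) (by omega)) hm hr
  have hexp : Tendsto (fun n => ((d n - 2 * r n : ℕ) : ℝ) / n) atTop (𝓝 (δ - 2 * ρ)) :=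
    (hd.sub (hr.const_mul 2)).congr fun n => by rw [Nat.cast_sub (hrd n)]; push_cast; ring
  refine (hball.add (hexp.mul_const (log q))).congr fun n => ?_
  rw [Nat.cast_mul, log_mul (mod_cast (ballCard_pos q _ _).ne') (by positivity), Nat.cast_pow,
    log_pow]
  ring

theorem stmt10 (q : ℕ) [NeZero q] (hq : 3 ≤ q) (δ : ℝ) (hδ : δ ∈ Set.Icc (0 : ℝ) 1) :
    Filter.Tendsto
      (fun n : ℕ => Real.logb q (AKAnticodeCard q ⌊δ * n⌋₊ n) / n)
      Filter.atTop (nhds (betaFn q δ)) := by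
  obtain ⟨hδ0, hδ1⟩ := hδ
  have hq' : (3 : ℝ) ≤ q := mod_cast hq
  set ρ := min (δ / 2) ((1 - δ) / ((q : ℝ) - 2)) with hρ
  have hρ0 : 0 ≤ ρ := le_min (by linarith) (div_nonneg (by linarith) (by linarith))
  have hd : Tendsto (fun n : ℕ => (⌊δ * n⌋₊ : ℝ) / n) atTop (𝓝 δ) :=
    (tendsto_nat_floor_mul_div_atTop hδ0).comp tendsto_natCast_atTop_atTop
  have hr := tendsto_rdn_div q hd
  rw [max_eq_left hρ0] at hr
  have h := (tendsto_log_ballCard_mul_pow_div q (by omega)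
    (fun n => Nat.floor_le_of_le (mul_le_of_le_one_left n.cast_nonneg hδ1))
    (fun n => two_mul_rdn_le q _ n) hd hr).div_const (log q)
  rw [← betaFn_mul_log q hq δ hρ, mul_div_cancel_right₀ _ (log_pos (by linarith)).ne'] at h
  exact h.congr fun n => by rw [AKAnticodeCard, logb, div_right_comm]
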